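/- arXiv:2310.08005 — 4 statements merged into one kernel-verified Lean document; each statement's English description precedes it below -/
import Mathlib

section
/- Let γ > 0, K₀ > 0 and C_E ≥ 0. Let f : [1,∞) → [0,∞) be a differentiable, non-increasing function satisfying the differential inequality f'(t) ≤ −K₀ f(t)^{1+γ} + C_E t^{−(1+γ)/γ} for all t ≥ 1. Then there exists a constant C, depending only on K₀, C_E, γ and f(1), such that f(t) ≤ C t^{−1/γ} for all t ≥ 1. -/
open Real Set Filter

/-!
The function `M t^(-1/γ)` is a barrier for `f`. Its derivative is `-(M/γ) t^(-(1+γ)/γ)`, while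
at a point where `f` touches it the differential inequality gives
`f' ≤ (C_E - K₀ M^(1+γ)) t^(-(1+γ)/γ)`: both carry the same power of `t`, so once
`M/γ + C_E < K₀ M^(1+γ)` and `f 1 ≤ M`, the function `f` can never cross the barrier.
-/

lemma exists_barrier_constant {γ K : ℝ} (hγ : 0 < γ) (hK : 0 < K) (a c : ℝ) :
    ∃ M, a ≤ M ∧ 0 ≤ M ∧ M / γ + c < K * M ^ (1 + γ) := by
  have hKpow : Tendsto (fun M : ℝ => K * M ^ γ) atTop atTop :=
    (tendsto_rpow_atTop hγ).const_mul_atTop hK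
  obtain ⟨M, hMa, hM1, hMγ⟩ := ((eventually_ge_atTop a).and ((eventually_ge_atTop 1).and
    (hKpow.eventually_gt_atTop (1 / γ + |c|)))).exists
  have hM0 : 0 < M := one_pos.trans_le hM1
  refine ⟨M, hMa, hM0.le, ?_⟩
  calc M / γ + c ≤ M * (1 / γ + |c|) := by
        rw [mul_add, mul_one_div]
        nlinarith [le_abs_self c, abs_nonneg c]
    _ < M * (K * M ^ γ) := mul_lt_mul_of_pos_left hMγ hM0
    _ = K * M ^ (1 + γ) := by rw [rpow_add hM0, rpow_one]; ring

lemma hasDerivAt_const_mul_rpow_neg_inv {γ x : ℝ} (M : ℝ) (hγ : 0 < γ) (hx : 0 < x) :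
    HasDerivAt (fun x => M * x ^ (-(1 / γ))) (-(M / γ) * x ^ (-(1 + γ) / γ)) x := by
  refine ((hasDerivAt_rpow_const (p := -(1 / γ)) (Or.inl hx.ne')).const_mul M).congr_deriv ?_
  rw [show -(1 / γ) - 1 = -(1 + γ) / γ by field_simp; ring]
  ring

lemma mul_rpow_neg_inv_rpow_one_add {γ M x : ℝ} (hγ : 0 < γ) (hM : 0 ≤ M) (hx : 0 < x) :
    (M * x ^ (-(1 / γ))) ^ (1 + γ) = M ^ (1 + γ) * x ^ (-(1 + γ) / γ) := by
  rw [mul_rpow hM (rpow_nonneg hx.le _), ← rpow_mul hx.le]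
  congr 2
  field_simp

theorem le_mul_rpow_neg_inv_of_deriv_le {γ K c M : ℝ} (hγ : 0 < γ) {f : ℝ → ℝ}
    (hf_diff : ∀ t, 1 ≤ t → DifferentiableAt ℝ f t)
    (hf_ineq : ∀ t, 1 ≤ t → deriv f t ≤ -K * f t ^ (1 + γ) + c * t ^ (-(1 + γ) / γ))
    (hM0 : 0 ≤ M) (hf1 : f 1 ≤ M) (hM : M / γ + c < K * M ^ (1 + γ)) {t : ℝ} (ht : 1 ≤ t) :
    f t ≤ M * t ^ (-(1 / γ)) := by
  have hpos : ∀ x ∈ Icc 1 t, 0 < x := fun x hx => one_pos.trans_le hx.1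
  have hB : ∀ x ∈ Icc 1 t, HasDerivAt (fun x => M * x ^ (-(1 / γ)))
      (-(M / γ) * x ^ (-(1 + γ) / γ)) x :=
    fun x hx => hasDerivAt_const_mul_rpow_neg_inv M hγ (hpos x hx)
  refine image_le_of_deriv_right_lt_deriv_boundary' (f' := deriv f)
    (fun x hx => (hf_diff x hx.1).continuousAt.continuousWithinAt)
    (fun x hx => (hf_diff x hx.1).hasDerivAt.hasDerivWithinAt) (by simpa using hf1)
    (fun x hx => (hB x hx).continuousAt.continuousWithinAt)
    (fun x hx => (hB x (Ico_subset_Icc_self hx)).hasDerivWithinAt) ?_ ⟨ht, le_rfl⟩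
  intro x hx hfx
  have hx0 := hpos x (Ico_subset_Icc_self hx)
  calc deriv f x ≤ -K * f x ^ (1 + γ) + c * x ^ (-(1 + γ) / γ) := hf_ineq x hx.1
    _ = (c - K * M ^ (1 + γ)) * x ^ (-(1 + γ) / γ) := by
        rw [hfx, mul_rpow_neg_inv_rpow_one_add hγ hM0 hx0]
        ring
    _ < -(M / γ) * x ^ (-(1 + γ) / γ) :=
        mul_lt_mul_of_pos_right (by linarith) (rpow_pos_of_pos hx0 _)

theorem continuous_differential_inequality_general
    (γ K₀ C_E : ℝ) (hγ : 0 < γ) (hK₀ : 0 < K₀)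
    (f : ℝ → ℝ)
    (hf_diff : ∀ t, 1 ≤ t → DifferentiableAt ℝ f t)
    (hf_ineq : ∀ t, 1 ≤ t →
      deriv f t ≤ -K₀ * f t ^ (1 + γ) + C_E * t ^ (-(1 + γ) / γ)) :
    ∃ C : ℝ, ∀ t, 1 ≤ t → f t ≤ C * t ^ (-(1 / γ)) := by
  obtain ⟨M, hf1, hM0, hM⟩ := exists_barrier_constant hγ hK₀ (f 1) C_E
  exact ⟨M, fun t ht => le_mul_rpow_neg_inv_of_deriv_le hγ hf_diff hf_ineq hM0 hf1 hM ht⟩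

/-- Lemma 3.3 (continuous differential inequality with critical error term):
if `f : [1,∞) → [0,∞)` is differentiable, non-increasing, and satisfies
`f'(t) ≤ -K₀ f(t)^{1+γ} + C_E t^{-(1+γ)/γ}`, then `f(t) ≤ C t^{-1/γ}`. -/
theorem continuous_differential_inequality
    (γ K₀ C_E : ℝ) (hγ : 0 < γ) (hK₀ : 0 < K₀) (hCE : 0 ≤ C_E)
    (f : ℝ → ℝ)
    (hf_nonneg : ∀ t, 1 ≤ t → 0 ≤ f t)
    (hf_diff : ∀ t, 1 ≤ t → DifferentiableAt ℝ f t)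
    (hf_mono : ∀ s t, 1 ≤ s → s ≤ t → f t ≤ f s)
    (hf_ineq : ∀ t, 1 ≤ t →
      deriv f t ≤ -K₀ * f t ^ (1 + γ) + C_E * t ^ (-(1 + γ) / γ)) :
    ∃ C : ℝ, ∀ t, 1 ≤ t → f t ≤ C * t ^ (-(1 / γ)) :=
  continuous_differential_inequality_general γ K₀ C_E hγ hK₀ f hf_diff hf_ineq
end

section
/- Let γ > 0 and K > 0. Suppose f : [0,∞) → [0,∞) is non-increasing, and E : [1,∞) → [0,∞) satisfies t^{(γ+1)/γ} E(t) → 0 as t → ∞. If for every t ≥ 1 one has f(t)^{1+γ} ≤ K (f(t−1) − f(t+1)) + E(t), then there exists a constant C such that f(t) ≤ C t^{−1/γ} for all t ≥ 1. -/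
/-!
Sampling `f` at odd points, `b n = f (2n - 1)`, the hypothesis at `t = 2n` together with
`f (2n + 1) ≤ f (2n)` gives the one-step recurrence
`b (n+1)^(1+γ) ≤ K (b n - b (n+1)) + D n^(-(γ+1)/γ)` for large `n`. The bound
`b n ≤ C n^(-1/γ)` then propagates by induction as soon as `C^(1+γ) ≥ 2^((γ+1)/γ) (K C / γ + D)`,
which holds for large `C` since `1 + γ > 1`: if it failed at `n + 1`, the drop `b n - b (n+1)`
would be at most `C (n^(-1/γ) - (n+1)^(-1/γ)) ≤ (C/γ) n^(-(γ+1)/γ)`, too small to sustain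
`b (n+1)^(1+γ) > C^(1+γ) (n+1)^(-(γ+1)/γ)`. Monotonicity of `f` interpolates between the samples.
-/

open Real Filter Set

lemma rpow_neg_sub_rpow_neg_add_one_le {q x : ℝ} (hq : 0 ≤ q) (hx : 0 < x) :
    x ^ (-q) - (x + 1) ^ (-q) ≤ q * x ^ (-q - 1) := by
  have hderiv : ∀ y ∈ Ioo x (x + 1), HasDerivAt (fun t : ℝ => t ^ (-q)) (-q * y ^ (-q - 1)) y :=
    fun y hy => hasDerivAt_rpow_const (Or.inl (hx.trans hy.1).ne')
  obtain ⟨c, hc, hslope⟩ := exists_hasDerivAt_eq_slope _ _ (lt_add_one x)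
    (fun y hy => (hasDerivAt_rpow_const (p := -q)
      (Or.inl (hx.trans_le hy.1).ne')).continuousAt.continuousWithinAt) hderiv
  rw [add_sub_cancel_left, div_one] at hslope
  have hc_le : c ^ (-q - 1) ≤ x ^ (-q - 1) := rpow_le_rpow_of_nonpos hx hc.1.le (by linarith)
  nlinarith

lemma rpow_neg_le_two_rpow_mul_rpow_neg_add_one {p x : ℝ} (hp : 0 ≤ p) (hx : 1 ≤ x) :
    x ^ (-p) ≤ 2 ^ p * (x + 1) ^ (-p) := by
  have hhalf : ((x + 1) / 2) ^ (-p) = 2 ^ p * (x + 1) ^ (-p) := by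
    rw [div_rpow (by linarith) zero_le_two, rpow_neg zero_le_two, div_inv_eq_mul, mul_comm]
  rw [← hhalf]
  exact rpow_le_rpow_of_nonpos (by linarith) (by linarith) (by linarith)

lemma eventually_mul_add_le_rpow_one_add {γ : ℝ} (hγ : 0 < γ) (a c : ℝ) :
    ∀ᶠ x in atTop, a * x + c ≤ x ^ (1 + γ) := by
  filter_upwards [eventually_ge_atTop 1, (tendsto_rpow_atTop hγ).eventually_ge_atTop (|a| + |c|)]
    with x hx hxγ
  rw [rpow_add (by linarith), rpow_one]
  nlinarith [le_abs_self a, le_abs_self c, abs_nonneg c]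

lemma eventually_le_rpow_neg_of_tendsto_rpow_mul {p : ℝ} {E : ℝ → ℝ}
    (hE : Tendsto (fun t => t ^ p * E t) atTop (nhds 0)) :
    ∀ᶠ t in atTop, E t ≤ t ^ (-p) := by
  filter_upwards [eventually_gt_atTop 0, hE.eventually (eventually_le_nhds one_pos)] with t ht hle
  have hpos : 0 < t ^ p := rpow_pos_of_pos ht p
  rw [rpow_neg ht.le, ← one_mul (t ^ p)⁻¹, le_mul_inv_iff₀ hpos, mul_comm]
  exact hle

lemma le_mul_rpow_neg_add_one_of_rpow_le {γ K D C x u v : ℝ} (hγ : 0 < γ) (hK : 0 ≤ K)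
    (hD : 0 ≤ D) (hC : 0 ≤ C) (hx : 1 ≤ x)
    (hC_large : 2 ^ ((γ + 1) / γ) * (K * C / γ + D) ≤ C ^ (1 + γ))
    (hu : u ≤ C * x ^ (-(1 / γ)))
    (hv : v ^ (1 + γ) ≤ K * (u - v) + D * x ^ (-((γ + 1) / γ))) :
    v ≤ C * (x + 1) ^ (-(1 / γ)) := by
  set p := (γ + 1) / γ with hp
  have hx0 : 0 < x := by linarith
  have hexp : -(1 / γ) * (1 + γ) = -p := by rw [hp]; field_simp; ring
  by_contra! hlt
  have hlower : C ^ (1 + γ) * (x + 1) ^ (-p) < v ^ (1 + γ) := by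
    calc C ^ (1 + γ) * (x + 1) ^ (-p) = (C * (x + 1) ^ (-(1 / γ))) ^ (1 + γ) := by
          rw [mul_rpow hC (by positivity), ← rpow_mul (by linarith), hexp]
      _ < v ^ (1 + γ) := rpow_lt_rpow (by positivity) hlt (by linarith)
  have hdrop : u - v ≤ C / γ * x ^ (-p) := by
    have hmvt := rpow_neg_sub_rpow_neg_add_one_le (le_of_lt (one_div_pos.2 hγ)) hx0
    have hexp' : -(1 / γ) - 1 = -p := by rw [hp]; field_simp; ring
    rw [hexp'] at hmvt
    calc u - v ≤ C * (x ^ (-(1 / γ)) - (x + 1) ^ (-(1 / γ))) := by linarith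
      _ ≤ C * (1 / γ * x ^ (-p)) := by gcongr
      _ = C / γ * x ^ (-p) := by ring
  have hupper : v ^ (1 + γ) ≤ 2 ^ p * (K * C / γ + D) * (x + 1) ^ (-p) := by
    calc v ^ (1 + γ) ≤ (K * C / γ + D) * x ^ (-p) := by
          have := mul_le_mul_of_nonneg_left hdrop hK
          linarith [show K * (C / γ * x ^ (-p)) = K * C / γ * x ^ (-p) by ring]
      _ ≤ (K * C / γ + D) * (2 ^ p * (x + 1) ^ (-p)) := by
          gcongr
          exact rpow_neg_le_two_rpow_mul_rpow_neg_add_one (by positivity) hx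
      _ = 2 ^ p * (K * C / γ + D) * (x + 1) ^ (-p) := by ring
  have := mul_le_mul_of_nonneg_right hC_large (rpow_nonneg (by linarith : (0:ℝ) ≤ x + 1) (-p))
  linarith

theorem exists_le_mul_rpow_neg_of_rpow_le_drop {γ K D : ℝ} (hγ : 0 < γ) (hK : 0 ≤ K)
    (hD : 0 ≤ D) {b : ℕ → ℝ} {N : ℕ}
    (hrec : ∀ n, N ≤ n → b (n + 1) ^ (1 + γ) ≤ K * (b n - b (n + 1)) + D * n ^ (-((γ + 1) / γ))) :
    ∃ C, 0 ≤ C ∧ ∀ n, 1 ≤ n → b n ≤ C * n ^ (-(1 / γ)) := by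
  obtain ⟨C, hC, hC_large, hC_init⟩ := (eventually_ge_atTop 0 |>.and <|
    (eventually_mul_add_le_rpow_one_add hγ (2 ^ ((γ + 1) / γ) * K / γ) (2 ^ ((γ + 1) / γ) * D)).and <|
    (Finset.range (N + 2)).eventually_all.2 fun n _ => eventually_ge_atTop (b n * n ^ (1 / γ))).exists
  have hinit : ∀ n, 1 ≤ n → n < N + 2 → b n ≤ C * n ^ (-(1 / γ)) := fun n hn hnN => by
    rw [rpow_neg (Nat.cast_nonneg n), le_mul_inv_iff₀ (rpow_pos_of_pos (by exact_mod_cast hn) _)]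
    exact hC_init n (Finset.mem_range.2 hnN)
  refine ⟨C, hC, fun n hn => ?_⟩
  induction n, hn using Nat.le_induction with
  | base => exact hinit 1 le_rfl (by omega)
  | succ n hn ih =>
    rcases lt_or_ge n N with hnN | hnN
    · exact hinit (n + 1) (by omega) (by omega)
    · push_cast
      exact le_mul_rpow_neg_add_one_of_rpow_le hγ hK hD hC (by exact_mod_cast hn)
        (by convert hC_large using 1; ring) ih (hrec n hnN)

lemma le_mul_rpow_neg_of_antitoneOn {f : ℝ → ℝ} (hf : AntitoneOn f (Ici 0)) {C q : ℝ}
    (hC : 0 ≤ C) (hq : 0 ≤ q) (hb : ∀ n : ℕ, 1 ≤ n → f (2 * n - 1) ≤ C * n ^ (-q))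
    {t : ℝ} (ht : 1 ≤ t) : f t ≤ 3 ^ q * C * t ^ (-q) := by
  set n := ⌊(t + 1) / 2⌋₊
  have hn : 1 ≤ n := Nat.le_floor (by push_cast; linarith)
  have hn' : (1 : ℝ) ≤ n := by exact_mod_cast hn
  have hnt : (n : ℝ) ≤ (t + 1) / 2 := Nat.floor_le (by linarith)
  have htn : (t + 1) / 2 < n + 1 := Nat.lt_floor_add_one _
  have hthird : (t / 3) ^ (-q) = 3 ^ q * t ^ (-q) := by
    rw [div_rpow (by linarith) (by norm_num), rpow_neg (by norm_num : (0:ℝ) ≤ 3), div_inv_eq_mul,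
      mul_comm]
  calc f t ≤ f (2 * n - 1) := hf (by simp; linarith) (by simp; linarith) (by linarith)
    _ ≤ C * n ^ (-q) := hb n hn
    _ ≤ C * (t / 3) ^ (-q) :=
        mul_le_mul_of_nonneg_left (rpow_le_rpow_of_nonpos (by positivity) (by linarith)
          (by linarith)) hC
    _ = 3 ^ q * C * t ^ (-q) := by rw [hthird]; ring

theorem discrete_differential_inequality_general
    (γ K : ℝ) (hγ : 0 < γ) (hK : 0 < K)
    (f E : ℝ → ℝ)
    (hf_nonneg : ∀ t, 0 ≤ t → 0 ≤ f t)
    (hf_mono : ∀ s t, 0 ≤ s → s ≤ t → f t ≤ f s)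
    (hE_decay :
      Filter.Tendsto (fun t : ℝ => t ^ ((γ + 1) / γ) * E t) Filter.atTop (nhds 0))
    (hrec : ∀ t, 1 ≤ t → f t ^ (1 + γ) ≤ K * (f (t - 1) - f (t + 1)) + E t) :
    ∃ C : ℝ, ∀ t, 1 ≤ t → f t ≤ C * t ^ (-(1 / γ)) := by
  set p := (γ + 1) / γ
  have hE_even : ∀ᶠ n : ℕ in atTop, E (2 * n) ≤ 2 ^ (-p) * n ^ (-p) ∧ 1 ≤ n := by
    refine (((tendsto_natCast_atTop_atTop.const_mul_atTop two_pos).eventually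
      (eventually_le_rpow_neg_of_tendsto_rpow_mul hE_decay)).and (eventually_ge_atTop 1)).mono ?_
    rintro n ⟨hE, hn⟩
    exact ⟨by rwa [mul_rpow zero_le_two n.cast_nonneg] at hE, hn⟩
  obtain ⟨N, hN⟩ := hE_even.exists_forall_of_atTop
  have hrec_odd : ∀ n : ℕ, N ≤ n → f (2 * ↑(n + 1) - 1) ^ (1 + γ) ≤
      K * (f (2 * n - 1) - f (2 * ↑(n + 1) - 1)) + 2 ^ (-p) * n ^ (-p) := by
    intro n hn
    obtain ⟨hE, hn1⟩ := hN n hn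
    have hn1' : (1 : ℝ) ≤ n := by exact_mod_cast hn1
    rw [show 2 * ((n + 1 : ℕ) : ℝ) - 1 = 2 * n + 1 by push_cast; ring]
    calc f (2 * n + 1) ^ (1 + γ) ≤ f (2 * n) ^ (1 + γ) :=
          rpow_le_rpow (hf_nonneg _ (by positivity)) (hf_mono _ _ (by positivity) (by linarith))
            (by linarith)
      _ ≤ K * (f (2 * n - 1) - f (2 * n + 1)) + E (2 * n) := hrec _ (by linarith)
      _ ≤ K * (f (2 * n - 1) - f (2 * n + 1)) + 2 ^ (-p) * n ^ (-p) := by linarith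
  obtain ⟨C, hC, hC_odd⟩ := exists_le_mul_rpow_neg_of_rpow_le_drop
    (b := fun n : ℕ => f (2 * n - 1)) hγ hK.le (by positivity) hrec_odd
  exact ⟨3 ^ (1 / γ) * C, fun t ht => le_mul_rpow_neg_of_antitoneOn
    (fun s hs t _ hst => hf_mono s t hs hst) hC (by positivity) hC_odd ht⟩

/-- Lemma A.1 (discrete differential inequality): if `f : [0,∞) → [0,∞)` is
non-increasing, `E ≥ 0` with `t^{(γ+1)/γ} E(t) → 0`, and
`f(t)^{1+γ} ≤ K (f(t-1) - f(t+1)) + E(t)` for `t ≥ 1`, then `f(t) ≤ C t^{-1/γ}`. -/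
theorem discrete_differential_inequality
    (γ K : ℝ) (hγ : 0 < γ) (hK : 0 < K)
    (f E : ℝ → ℝ)
    (hf_nonneg : ∀ t, 0 ≤ t → 0 ≤ f t)
    (hf_mono : ∀ s t, 0 ≤ s → s ≤ t → f t ≤ f s)
    (hE_nonneg : ∀ t, 1 ≤ t → 0 ≤ E t)
    (hE_decay :
      Filter.Tendsto (fun t : ℝ => t ^ ((γ + 1) / γ) * E t) Filter.atTop (nhds 0))
    (hrec : ∀ t, 1 ≤ t → f t ^ (1 + γ) ≤ K * (f (t - 1) - f (t + 1)) + E t) :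
    ∃ C : ℝ, ∀ t, 1 ≤ t → f t ≤ C * t ^ (-(1 / γ)) :=
  discrete_differential_inequality_general γ K hγ hK f E hf_nonneg hf_mono hE_decay hrec
end

section
/- Let ρ > 1 and C > 0, and let (δ_j)_{j≥1} be a sequence of non-negative real numbers such that for every j ≥ 1 the tail bound ∑_{i=j}^∞ δ_i² ≤ C j^{−ρ} holds. Then there exists ᾱ ∈ (0,1) such that ∑_{j=1}^∞ δ_j^{ᾱ} < ∞. -/
/-!
On the dyadic block `[2^k, 2^(k+1))`, Hölder's inequality and the tail bound give
`∑ δ_j^α ≤ 2^(k(1 - α/2)) (C 2^(-kρ))^(α/2)`, which decays geometrically in `k` as soon as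
`α (1 + ρ) > 2`. Since `2 / (1 + ρ) < 1`, such an `α < 1` exists, and summing over the blocks
bounds every partial sum of `δ_j^α`.
-/

open Finset

theorem Real.sum_rpow_le_card_rpow_mul_sum_rpow {ι : Type*} (s : Finset ι) {x : ι → ℝ}
    {p q : ℝ} (hx : ∀ i ∈ s, 0 ≤ x i) (hp : 0 < p) (hpq : p ≤ q) :
    ∑ i ∈ s, x i ^ p ≤ (#s : ℝ) ^ (1 - p / q) * (∑ i ∈ s, x i ^ q) ^ (p / q) := by
  have hq : 0 < q := hp.trans_le hpq
  have hpow : ∑ i ∈ s, (x i ^ p) ^ (q / p) = ∑ i ∈ s, x i ^ q :=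
    sum_congr rfl fun i hi => by rw [← Real.rpow_mul (hx i hi), mul_div_cancel₀ _ hp.ne']
  have h := Real.rpow_sum_le_const_mul_sum_rpow_of_nonneg s (f := fun i => x i ^ p)
    ((one_le_div hp).2 hpq) fun i hi => Real.rpow_nonneg (hx i hi) p
  rw [hpow] at h
  have hS : 0 ≤ ∑ i ∈ s, x i ^ p := sum_nonneg fun i hi => Real.rpow_nonneg (hx i hi) p
  have hn : (0 : ℝ) ≤ #s := Nat.cast_nonneg _
  calc ∑ i ∈ s, x i ^ p = ((∑ i ∈ s, x i ^ p) ^ (q / p)) ^ (p / q) := by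
        rw [← Real.rpow_mul hS, div_mul_div_comm, mul_comm q, div_self (by positivity),
          Real.rpow_one]
    _ ≤ ((#s : ℝ) ^ (q / p - 1) * ∑ i ∈ s, x i ^ q) ^ (p / q) :=
        Real.rpow_le_rpow (Real.rpow_nonneg hS _) h (by positivity)
    _ = (#s : ℝ) ^ (1 - p / q) * (∑ i ∈ s, x i ^ q) ^ (p / q) := by
        rw [Real.mul_rpow (Real.rpow_nonneg hn _)
          (sum_nonneg fun i hi => Real.rpow_nonneg (hx i hi) q), ← Real.rpow_mul hn]
        congr 2
        field_simp

theorem sum_Ico_le_tsum_nat_add {f : ℕ → ℝ} (hf : ∀ i, 0 ≤ f i) (hs : Summable f) (m n : ℕ) :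
    ∑ i ∈ Ico m n, f i ≤ ∑' i, f (m + i) := by
  rw [sum_Ico_eq_sum_range]
  exact ((summable_nat_add_iff m).2 hs |>.congr fun i => by rw [add_comm]).sum_le_tsum _
    fun i _ => hf _

theorem sum_range_two_pow_eq_add_sum_dyadic {M : Type*} [AddCommMonoid M] (f : ℕ → M) (K : ℕ) :
    ∑ j ∈ range (2 ^ K), f j = f 0 + ∑ k ∈ range K, ∑ j ∈ Ico (2 ^ k) (2 ^ (k + 1)), f j := by
  induction K with
  | zero => simp
  | succ K ih =>
    rw [← sum_range_add_sum_Ico _ (Nat.pow_le_pow_right two_pos K.le_succ), ih, sum_range_succ,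
      add_assoc]

theorem summable_of_sum_dyadic_le {f g : ℕ → ℝ} (hf : ∀ j, 0 ≤ f j) (hg : Summable g)
    (hblock : ∀ k, ∑ j ∈ Ico (2 ^ k) (2 ^ (k + 1)), f j ≤ g k) : Summable f := by
  have hg0 : ∀ k, 0 ≤ g k := fun k => (sum_nonneg fun j _ => hf j).trans (hblock k)
  refine summable_of_sum_range_le (c := f 0 + ∑' k, g k) hf fun N => ?_
  calc ∑ j ∈ range N, f j ≤ ∑ j ∈ range (2 ^ N), f j :=
        sum_le_sum_of_subset_of_nonneg (range_subset_range.2 N.lt_two_pow_self.le)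
          fun j _ _ => hf j
    _ = f 0 + ∑ k ∈ range N, ∑ j ∈ Ico (2 ^ k) (2 ^ (k + 1)), f j :=
        sum_range_two_pow_eq_add_sum_dyadic f N
    _ ≤ f 0 + ∑' k, g k := by
        gcongr
        exact (sum_le_sum fun k _ => hblock k).trans (hg.sum_le_tsum _ fun k _ => hg0 k)

theorem sum_Ico_two_mul_rpow_le_of_tail_le {δ : ℕ → ℝ} {C ρ α : ℝ} (hδ : ∀ j, 0 ≤ δ j)
    (hsum : Summable fun i => δ i ^ 2) (hC : 0 ≤ C) (hα : 0 < α) (hα2 : α ≤ 2) {m : ℕ}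
    (hm : 0 < m) (htail : ∑' i, δ (m + i) ^ 2 ≤ C * (m : ℝ) ^ (-ρ)) :
    ∑ j ∈ Ico m (2 * m), δ j ^ α ≤ C ^ (α / 2) * (m : ℝ) ^ (1 - α * (1 + ρ) / 2) := by
  have hcard : #(Ico m (2 * m)) = m := by rw [Nat.card_Ico]; omega
  have hm' : (0 : ℝ) < m := by exact_mod_cast hm
  calc ∑ j ∈ Ico m (2 * m), δ j ^ α
      ≤ (m : ℝ) ^ (1 - α / 2) * (∑ j ∈ Ico m (2 * m), δ j ^ (2 : ℝ)) ^ (α / 2) := by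
        simpa [hcard] using
          Real.sum_rpow_le_card_rpow_mul_sum_rpow (Ico m (2 * m)) (fun j _ => hδ j) hα hα2
    _ ≤ (m : ℝ) ^ (1 - α / 2) * (C * (m : ℝ) ^ (-ρ)) ^ (α / 2) := by
        simp_rw [Real.rpow_two]
        gcongr
        exact (sum_Ico_le_tsum_nat_add (fun i => sq_nonneg _) hsum m _).trans htail
    _ = C ^ (α / 2) * (m : ℝ) ^ (1 - α * (1 + ρ) / 2) := by
        rw [Real.mul_rpow hC (by positivity), ← Real.rpow_mul hm'.le, mul_left_comm,
          ← Real.rpow_add hm']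
        ring_nf

/-- Lemma A.2: polynomial decay of ℓ² tails (exponent ρ > 1) of a non-negative
sequence implies summability of some power ᾱ < 1 of the sequence. -/
theorem tail_decay_implies_power_summable
    (ρ C : ℝ) (hρ : 1 < ρ) (hC : 0 < C)
    (δ : ℕ → ℝ) (hδ : ∀ j, 0 ≤ δ j)
    (hsum : Summable (fun i => δ i ^ 2))
    (htail : ∀ j : ℕ, 1 ≤ j → (∑' i : ℕ, δ (j + i) ^ 2) ≤ C * (j : ℝ) ^ (-ρ)) :
    ∃ α : ℝ, 0 < α ∧ α < 1 ∧ Summable (fun j => δ j ^ α) := by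
  obtain ⟨α, hα_gt, hα_lt⟩ : ∃ α, 2 / (1 + ρ) < α ∧ α < 1 :=
    exists_between ((div_lt_one (by linarith)).2 (by linarith))
  have hα : 0 < α := (div_pos two_pos (by linarith)).trans hα_gt
  have hexp : 1 - α * (1 + ρ) / 2 < 0 := by
    rw [div_lt_iff₀ (by linarith)] at hα_gt
    linarith
  set r : ℝ := 2 ^ (1 - α * (1 + ρ) / 2)
  have hr : r < 1 := Real.rpow_lt_one_of_one_lt_of_neg one_lt_two hexp
  refine ⟨α, hα, hα_lt, summable_of_sum_dyadic_le (fun j => Real.rpow_nonneg (hδ j) α)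
    ((summable_geometric_of_lt_one (by positivity) hr).mul_left (C ^ (α / 2))) fun k => ?_⟩
  have hk : 0 < 2 ^ k := Nat.two_pow_pos k
  calc ∑ j ∈ Ico (2 ^ k) (2 ^ (k + 1)), δ j ^ α
      ≤ C ^ (α / 2) * ((2 ^ k : ℕ) : ℝ) ^ (1 - α * (1 + ρ) / 2) := by
        rw [pow_succ']
        exact sum_Ico_two_mul_rpow_le_of_tail_le hδ hsum hC.le hα (by linarith) hk (htail _ hk)
    _ = C ^ (α / 2) * r ^ k := by
        rw [Real.rpow_pow_comm zero_le_two, Nat.cast_pow, Nat.cast_ofNat]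
end

section
/- Let γ ∈ (0,1), C₀ > 0 and t₀ ≥ 1. Let f : [t₀,∞) → ℝ be continuously differentiable, non-increasing, and satisfy 0 ≤ f(t) ≤ C₀ t^{−1/γ} for all t ≥ t₀. Then there exists a constant C₁, depending only on C₀ and γ, such that for all t₀ ≤ t₁ ≤ t₂ one has ∫_{t₁}^{t₂} √(−f'(t)) dt ≤ C₁ t₁^{−(1/γ−1)/2}. -/
/-!
On a dyadic block `[a, b] ⊆ [a, 2a]` the AM–GM inequality `√x ≤ (x + c²) / (2c)`, integrated and
optimised in `c`, bounds `∫_a^b √(-f')` by `√((f a - f b) · a) ≤ √C₀ · a^{-(1/γ-1)/2}`. Since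
`-(1/γ-1)/2 < 0`, the bounds over the blocks `[2ᵏ t₁, 2ᵏ⁺¹ t₁]` form a convergent geometric series.
-/

open MeasureTheory intervalIntegral Set

theorem Real.sqrt_le_add_sq_div {x c : ℝ} (hx : 0 ≤ x) (hc : 0 < c) :
    √x ≤ (x + c ^ 2) / (2 * c) := by
  rw [le_div_iff₀ (by positivity)]
  have := two_mul_le_add_sq (√x) c
  rw [Real.sq_sqrt hx] at this
  linarith

theorem integral_sqrt_neg_deriv_le {f : ℝ → ℝ} {a b c : ℝ} (hab : a ≤ b) (hc : 0 < c)
    (hf : ∀ t ∈ Icc a b, DifferentiableAt ℝ f t) (hf' : ContinuousOn (deriv f) (Icc a b))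
    (hf'_nonpos : ∀ t ∈ Icc a b, deriv f t ≤ 0) :
    ∫ t in a..b, √(-deriv f t) ≤ (f a - f b + c ^ 2 * (b - a)) / (2 * c) := by
  have hint : IntervalIntegrable (deriv f) volume a b := hf'.intervalIntegrable_of_Icc hab
  have hftc : ∫ t in a..b, deriv f t = f b - f a :=
    integral_deriv_eq_sub (fun t ht => hf t (by rwa [uIcc_of_le hab] at ht)) hint
  calc ∫ t in a..b, √(-deriv f t)
      ≤ ∫ t in a..b, (-deriv f t + c ^ 2) / (2 * c) :=
        integral_mono_on hab (hf'.neg.sqrt.intervalIntegrable_of_Icc hab)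
          ((hf'.neg.add continuousOn_const).div_const _ |>.intervalIntegrable_of_Icc hab)
          fun t ht => Real.sqrt_le_add_sq_div (neg_nonneg.2 (hf'_nonpos t ht)) hc
    _ = (f a - f b + c ^ 2 * (b - a)) / (2 * c) := by
        rw [intervalIntegral.integral_div,
          integral_add (f := fun t => -deriv f t) hint.neg intervalIntegrable_const,
          intervalIntegral.integral_neg, hftc, intervalIntegral.integral_const, smul_eq_mul]
        ring

theorem integral_sqrt_neg_deriv_le_of_le_rpow {f : ℝ → ℝ} {C p a b : ℝ} (hC : 0 < C)
    (ha : 0 < a) (hab : a ≤ b) (hb : b ≤ 2 * a)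
    (hf : ∀ t ∈ Icc a b, DifferentiableAt ℝ f t) (hf' : ContinuousOn (deriv f) (Icc a b))
    (hf'_nonpos : ∀ t ∈ Icc a b, deriv f t ≤ 0) (hfa : f a ≤ C * a ^ (-p)) (hfb : 0 ≤ f b) :
    ∫ t in a..b, √(-deriv f t) ≤ √C * a ^ (-(p - 1) / 2) := by
  set c := √C * a ^ (-(p + 1) / 2)
  have hc : 0 < c := by positivity
  -- this choice of `c` balances the two terms of the AM–GM bound
  have hc_sq : c ^ 2 * a = C * a ^ (-p) := by
    rw [mul_pow, Real.sq_sqrt hC.le, ← Real.rpow_natCast, ← Real.rpow_mul ha.le, mul_assoc,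
      ← Real.rpow_add_one ha.ne']
    norm_num
  have hc_mul : c * a = √C * a ^ (-(p - 1) / 2) := by
    rw [mul_assoc, ← Real.rpow_add_one ha.ne']
    ring_nf
  calc ∫ t in a..b, √(-deriv f t)
      ≤ (f a - f b + c ^ 2 * (b - a)) / (2 * c) :=
        integral_sqrt_neg_deriv_le hab hc hf hf' hf'_nonpos
    _ ≤ (c ^ 2 * a + c ^ 2 * a) / (2 * c) := by
        gcongr ?_ / _
        nlinarith [mul_le_mul_of_nonneg_left (by linarith : b - a ≤ a) (sq_nonneg c)]
    _ = √C * a ^ (-(p - 1) / 2) := by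
        rw [← hc_mul]
        field_simp
        ring

theorem integral_le_of_dyadic_le {g : ℝ → ℝ} {K β t₁ t₂ : ℝ} (hK : 0 ≤ K) (hβ : β < 0)
    (ht₁ : 0 < t₁) (ht₂ : t₁ ≤ t₂)
    (hg : ∀ a b, t₁ ≤ a → a ≤ b → IntervalIntegrable g volume a b)
    (hblock : ∀ a b, t₁ ≤ a → a ≤ b → b ≤ 2 * a → ∫ t in a..b, g t ≤ K * a ^ β) :
    ∫ t in t₁..t₂, g t ≤ K / (1 - 2 ^ β) * t₁ ^ β := by
  have hr : (2 : ℝ) ^ β < 1 := Real.rpow_lt_one_of_one_lt_of_neg one_lt_two hβ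
  have hr' : 0 < 1 - (2 : ℝ) ^ β := by linarith
  have hgeom : K ≤ K / (1 - 2 ^ β) :=
    (le_div_iff₀ hr').2 (mul_le_of_le_one_right hK (by linarith [Real.rpow_pos_of_pos two_pos β]))
  have hdyadic : ∀ N : ℕ, ∀ s u, t₁ ≤ s → s ≤ u → u ≤ 2 ^ N * s →
      ∫ t in s..u, g t ≤ K / (1 - 2 ^ β) * s ^ β := by
    intro N
    induction N with
    | zero =>
      intro s u hs hsu hu
      rw [le_antisymm (by simpa using hu) hsu, integral_same]
      have : 0 < s := ht₁.trans_le hs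
      positivity
    | succ N ih =>
      intro s u hs hsu hu
      have hs0 : 0 < s := ht₁.trans_le hs
      rcases le_or_gt u (2 * s) with hu2 | hu2
      · exact (hblock s u hs hsu hu2).trans (by gcongr)
      · have htail := ih (2 * s) u (by linarith) hu2.le (by rw [pow_succ] at hu; linarith)
        rw [← integral_add_adjacent_intervals (hg s (2 * s) hs (by linarith))
          (hg (2 * s) u (by linarith) hu2.le)]
        calc (∫ t in s..2 * s, g t) + ∫ t in 2 * s..u, g t
            ≤ K * s ^ β + K / (1 - 2 ^ β) * (2 ^ β * s ^ β) := by
              rw [← Real.mul_rpow zero_le_two hs0.le]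
              exact add_le_add (hblock s (2 * s) hs (by linarith) le_rfl) htail
          _ = K / (1 - 2 ^ β) * s ^ β := by
              field_simp
              ring
  obtain ⟨N, hN⟩ := pow_unbounded_of_one_lt (t₂ / t₁) one_lt_two
  exact hdyadic N t₁ t₂ le_rfl ht₂ ((div_lt_iff₀ ht₁).1 hN).le

/-- Analytic core of Theorem 3.4: if `f` is C¹, non-increasing with
`0 ≤ f(t) ≤ C₀ t^{-1/γ}`, then `∫_{t₁}^{t₂} √(-f') ≤ C₁ t₁^{-(1/γ-1)/2}`,
with `C₁` depending only on `C₀` and `γ`. -/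
theorem sqrt_deriv_integral_bound
    (γ C₀ : ℝ) (hγ0 : 0 < γ) (hγ1 : γ < 1) (hC₀ : 0 < C₀) :
    ∃ C₁ : ℝ, ∀ t₀ : ℝ, 1 ≤ t₀ → ∀ f : ℝ → ℝ,
      (∀ t, t₀ ≤ t → DifferentiableAt ℝ f t) →
      ContinuousOn (deriv f) (Set.Ici t₀) →
      (∀ s t, t₀ ≤ s → s ≤ t → f t ≤ f s) →
      (∀ t, t₀ ≤ t → 0 ≤ f t ∧ f t ≤ C₀ * t ^ (-(1 / γ))) →
      ∀ t₁ t₂, t₀ ≤ t₁ → t₁ ≤ t₂ →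
        (∫ t in t₁..t₂, Real.sqrt (-(deriv f t)))
          ≤ C₁ * t₁ ^ (-(1 / γ - 1) / 2) := by
  have hβ : -(1 / γ - 1) / 2 < 0 := by linarith [one_lt_one_div hγ0 hγ1]
  refine ⟨√C₀ / (1 - 2 ^ (-(1 / γ - 1) / 2)), ?_⟩
  intro t₀ ht₀ f hdiff hcont hmono hbound t₁ t₂ ht₁ ht₂
  have hanti : AntitoneOn f (Ici t₀) := fun s hs t _ hst => hmono s t hs hst
  have hf'_nonpos : ∀ t, t₀ ≤ t → deriv f t ≤ 0 := fun t ht =>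
    (hdiff t ht).derivWithin (uniqueDiffOn_Ici t₀ t ht) ▸ hanti.derivWithin_nonpos
  refine integral_le_of_dyadic_le (Real.sqrt_nonneg _) hβ (by linarith) ht₂
    (fun a b ha hab => (hcont.mono fun t ht => ht₁.trans (ha.trans ht.1)).neg.sqrt
      |>.intervalIntegrable_of_Icc hab) fun a b ha hab hb => ?_
  have hIcc : Icc a b ⊆ Ici t₀ := fun t ht => ht₁.trans (ha.trans ht.1)
  exact integral_sqrt_neg_deriv_le_of_le_rpow hC₀ (by linarith) hab hb
    (fun t ht => hdiff t (hIcc ht)) (hcont.mono hIcc) (fun t ht => hf'_nonpos t (hIcc ht))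
    (hbound a (ht₁.trans ha)).2 (hbound b (ht₁.trans (ha.trans hab))).1
end
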